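/- arXiv:2509.13975 — 2 statements merged into one kernel-verified Lean document; each statement's English description precedes it below -/
import Mathlib

section
/- The log conjugate-prior density is concave: for every integer n ≥ 2, every η > 0, and every ν ∈ ℝ^n, the function F(α) := η·[log Γ(∑_{i=1}^n α_i) − ∑_{i=1}^n log Γ(α_i)] − ∑_{i=1}^n α_i·ν_i is concave on the set {α ∈ ℝ^n : α_i > 0 for all i}. -/
/-!
By the Beta integral, `Γ(x)Γ(y)/Γ(x+y) = ∫₀¹ t^(x-1) (1-t)^(y-1) dt`, and Hölder's inequality
makes this integral jointly log-convex in `(x, y)`; hence `log Γ(x+y) - log Γ(x) - log Γ(y)` is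
concave on the open quadrant. Peeling off one coordinate at a time, `log Γ(∑ αᵢ) - ∑ log Γ(αᵢ)`
is a sum of such terms composed with linear maps, so it is concave; scaling by `η > 0` and
subtracting the linear form `⟨α, ν⟩` keeps it concave.
-/

open Real MeasureTheory Set

theorem MeasureTheory.integral_rpow_mul_rpow_le {α : Type*} [MeasurableSpace α] {μ : Measure α}
    {f g : α → ℝ} (hf₀ : 0 ≤ᵐ[μ] f) (hg₀ : 0 ≤ᵐ[μ] g) (hf : Integrable f μ) (hg : Integrable g μ)
    {p q : ℝ} (hp : 0 ≤ p) (hq : 0 ≤ q) (hpq : p + q = 1) :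
    ∫ a, f a ^ p * g a ^ q ∂μ ≤ (∫ a, f a ∂μ) ^ p * (∫ a, g a ∂μ) ^ q := by
  have hfg₀ : 0 ≤ᵐ[μ] fun a => f a ^ p * g a ^ q := by
    filter_upwards [hf₀, hg₀] with a hfa hga
    exact mul_nonneg (rpow_nonneg hfa p) (rpow_nonneg hga q)
  have hfg : (fun a => ENNReal.ofReal (f a ^ p * g a ^ q))
      =ᵐ[μ] fun a => ENNReal.ofReal (f a) ^ p * ENNReal.ofReal (g a) ^ q := by
    filter_upwards [hf₀, hg₀] with a hfa hga
    rw [ENNReal.ofReal_mul (rpow_nonneg hfa p), ENNReal.ofReal_rpow_of_nonneg hfa hp,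
      ENNReal.ofReal_rpow_of_nonneg hga hq]
  have hmeas : AEStronglyMeasurable (fun a => f a ^ p * g a ^ q) μ :=
    ((hf.1.aemeasurable.pow_const p).mul (hg.1.aemeasurable.pow_const q)).aestronglyMeasurable
  have hf' := integral_nonneg_of_ae hf₀
  have hg' := integral_nonneg_of_ae hg₀
  rw [integral_eq_lintegral_of_nonneg_ae hfg₀ hmeas]
  refine ENNReal.toReal_le_of_le_ofReal (mul_nonneg (rpow_nonneg hf' p) (rpow_nonneg hg' q)) ?_
  calc ∫⁻ a, ENNReal.ofReal (f a ^ p * g a ^ q) ∂μ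
      = ∫⁻ a, ENNReal.ofReal (f a) ^ p * ENNReal.ofReal (g a) ^ q ∂μ := lintegral_congr_ae hfg
    _ ≤ (∫⁻ a, ENNReal.ofReal (f a) ∂μ) ^ p * (∫⁻ a, ENNReal.ofReal (g a) ∂μ) ^ q :=
      ENNReal.lintegral_mul_norm_pow_le hf.1.aemeasurable.ennreal_ofReal
        hg.1.aemeasurable.ennreal_ofReal hp hq hpq
    _ = ENNReal.ofReal ((∫ a, f a ∂μ) ^ p * (∫ a, g a ∂μ) ^ q) := by
      rw [← ofReal_integral_eq_lintegral_ofReal hf hf₀,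
        ← ofReal_integral_eq_lintegral_ofReal hg hg₀, ENNReal.ofReal_mul (rpow_nonneg hf' p), ENNReal.ofReal_rpow_of_nonneg hf' hp,
        ENNReal.ofReal_rpow_of_nonneg hg' hq]

namespace ProbabilityTheory

lemma re_betaIntegrand {x y t : ℝ} (ht : t ∈ Ioo (0 : ℝ) 1) :
    ((t : ℂ) ^ ((x : ℂ) - 1) * (1 - (t : ℂ)) ^ ((y : ℂ) - 1)).re
      = t ^ (x - 1) * (1 - t) ^ (y - 1) := by
  norm_cast
  rw [← Complex.ofReal_cpow ht.1.le, ← Complex.ofReal_cpow (sub_nonneg.2 ht.2.le),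
    ← Complex.ofReal_mul, Complex.ofReal_re]

lemma integrableOn_complex_betaIntegrand {x y : ℝ} (hx : 0 < x) (hy : 0 < y) :
    IntegrableOn (fun t : ℝ => (t : ℂ) ^ ((x : ℂ) - 1) * (1 - (t : ℂ)) ^ ((y : ℂ) - 1))
      (Ioo 0 1) :=
  (intervalIntegrable_iff_integrableOn_Ioo_of_le zero_le_one).1 <|
    Complex.betaIntegral_convergent (by simpa) (by simpa)

lemma integrableOn_betaIntegrand {x y : ℝ} (hx : 0 < x) (hy : 0 < y) :
    IntegrableOn (fun t : ℝ => t ^ (x - 1) * (1 - t) ^ (y - 1)) (Ioo 0 1) :=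
  IntegrableOn.congr_fun (integrableOn_complex_betaIntegrand hx hy).re
    (fun _ ht => re_betaIntegrand ht) measurableSet_Ioo

lemma beta_eq_integral {x y : ℝ} (hx : 0 < x) (hy : 0 < y) :
    beta x y = ∫ t in Ioo 0 1, t ^ (x - 1) * (1 - t) ^ (y - 1) := by
  rw [beta_eq_betaIntegralReal x y hx hy, Complex.betaIntegral,
    intervalIntegral.integral_of_le zero_le_one, integral_Ioc_eq_integral_Ioo,
    ← RCLike.re_to_complex, ← integral_re (integrableOn_complex_betaIntegrand hx hy)]
  exact setIntegral_congr_fun measurableSet_Ioo fun _ ht => re_betaIntegrand ht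

lemma beta_mul_add_mul_le_rpow_beta_mul_rpow_beta {x₁ y₁ x₂ y₂ a b : ℝ} (hx₁ : 0 < x₁)
    (hy₁ : 0 < y₁) (hx₂ : 0 < x₂) (hy₂ : 0 < y₂) (ha : 0 ≤ a) (hb : 0 ≤ b) (hab : a + b = 1) :
    beta (a * x₁ + b * x₂) (a * y₁ + b * y₂) ≤ beta x₁ y₁ ^ a * beta x₂ y₂ ^ b := by
  have split_exponent : ∀ {u : ℝ}, 0 < u → ∀ z₁ z₂ : ℝ,
      u ^ (a * z₁ + b * z₂ - 1) = (u ^ (z₁ - 1)) ^ a * (u ^ (z₂ - 1)) ^ b := by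
    intro u hu z₁ z₂
    rw [← rpow_mul hu.le, ← rpow_mul hu.le, ← rpow_add hu]
    congr 1
    linear_combination hab
  have hx : 0 < a * x₁ + b * x₂ := convex_Ioi (0 : ℝ) hx₁ hx₂ ha hb hab
  have hy : 0 < a * y₁ + b * y₂ := convex_Ioi (0 : ℝ) hy₁ hy₂ ha hb hab
  rw [beta_eq_integral hx hy, beta_eq_integral hx₁ hy₁, beta_eq_integral hx₂ hy₂]
  calc ∫ t in Ioo (0 : ℝ) 1, t ^ (a * x₁ + b * x₂ - 1) * (1 - t) ^ (a * y₁ + b * y₂ - 1)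
      = ∫ t in Ioo (0 : ℝ) 1, (t ^ (x₁ - 1) * (1 - t) ^ (y₁ - 1)) ^ a
          * (t ^ (x₂ - 1) * (1 - t) ^ (y₂ - 1)) ^ b := by
        refine setIntegral_congr_fun measurableSet_Ioo fun t ht => ?_
        have ht' : 0 < 1 - t := sub_pos.2 ht.2
        rw [split_exponent ht.1, split_exponent ht', mul_rpow (rpow_nonneg ht.1.le _)
          (rpow_nonneg ht'.le _), mul_rpow (rpow_nonneg ht.1.le _) (rpow_nonneg ht'.le _)]
        ring
    _ ≤ _ := by
        have nonneg : ∀ x y : ℝ, 0 ≤ᵐ[volume.restrict (Ioo 0 1)]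
            fun t : ℝ => t ^ (x - 1) * (1 - t) ^ (y - 1) :=
          fun x y => ae_restrict_of_forall_mem measurableSet_Ioo fun t ht =>
            mul_nonneg (rpow_nonneg ht.1.le _) (rpow_nonneg (sub_nonneg.2 ht.2.le) _)
        exact integral_rpow_mul_rpow_le (nonneg x₁ y₁) (nonneg x₂ y₂)
          (integrableOn_betaIntegrand hx₁ hy₁) (integrableOn_betaIntegrand hx₂ hy₂) ha hb hab

lemma convexOn_log_beta : ConvexOn ℝ (Ioi 0 ×ˢ Ioi 0) fun p : ℝ × ℝ => log (beta p.1 p.2) := by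
  refine ⟨(convex_Ioi 0).prod (convex_Ioi 0), ?_⟩
  rintro ⟨x₁, y₁⟩ ⟨hx₁, hy₁⟩ ⟨x₂, y₂⟩ ⟨hx₂, hy₂⟩ a b ha hb hab
  rw [mem_Ioi] at hx₁ hy₁ hx₂ hy₂
  simp only [Prod.smul_mk, Prod.mk_add_mk, smul_eq_mul]
  have hβ₁ := beta_pos hx₁ hy₁
  have hβ₂ := beta_pos hx₂ hy₂
  have hx : 0 < a * x₁ + b * x₂ := convex_Ioi (0 : ℝ) hx₁ hx₂ ha hb hab
  have hy : 0 < a * y₁ + b * y₂ := convex_Ioi (0 : ℝ) hy₁ hy₂ ha hb hab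
  calc log (beta (a * x₁ + b * x₂) (a * y₁ + b * y₂))
      ≤ log (beta x₁ y₁ ^ a * beta x₂ y₂ ^ b) := log_le_log (beta_pos hx hy)
        (beta_mul_add_mul_le_rpow_beta_mul_rpow_beta hx₁ hy₁ hx₂ hy₂ ha hb hab)
    _ = a * log (beta x₁ y₁) + b * log (beta x₂ y₂) := by
        rw [log_mul (by positivity) (by positivity), log_rpow hβ₁, log_rpow hβ₂]

lemma log_beta {x y : ℝ} (hx : 0 < x) (hy : 0 < y) :
    log (beta x y) = log (Gamma x) + log (Gamma y) - log (Gamma (x + y)) := by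
  rw [beta, log_div (mul_pos (Gamma_pos_of_pos hx) (Gamma_pos_of_pos hy)).ne'
    (Gamma_pos_of_pos (add_pos hx hy)).ne',
    log_mul (Gamma_pos_of_pos hx).ne' (Gamma_pos_of_pos hy).ne']

end ProbabilityTheory

open ProbabilityTheory

theorem concaveOn_log_Gamma_add_sub_log_Gamma_sub_log_Gamma :
    ConcaveOn ℝ (Ioi 0 ×ˢ Ioi 0) fun p : ℝ × ℝ =>
      log (Gamma (p.1 + p.2)) - log (Gamma p.1) - log (Gamma p.2) :=
  convexOn_log_beta.neg.congr fun p hp => by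
    simp only [Pi.neg_apply, log_beta hp.1 hp.2]
    ring

theorem convex_setOf_forall_pos (ι : Type*) : Convex ℝ {α : ι → ℝ | ∀ i, 0 < α i} :=
  fun _ hx _ hy _ _ ha hb hab i => convex_Ioi (0 : ℝ) (hx i) (hy i) ha hb hab

theorem concaveOn_log_Gamma_sum_sub_sum_log_Gamma {ι : Type*} {s : Finset ι} (hs : s.Nonempty) :
    ConcaveOn ℝ {α : ι → ℝ | ∀ i, 0 < α i}
      fun α => log (Gamma (∑ i ∈ s, α i)) - ∑ i ∈ s, log (Gamma (α i)) := by
  induction hs using Finset.Nonempty.cons_induction with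
  | singleton j => simpa using concaveOn_const 0 (convex_setOf_forall_pos ι)
  | cons j s hj hs ih =>
    let M : (ι → ℝ) →ₗ[ℝ] ℝ × ℝ := (LinearMap.proj j).prod (∑ i ∈ s, LinearMap.proj i)
    have hM : ∀ α, M α = (α j, ∑ i ∈ s, α i) := fun α => by simp [M]
    have hstep := (concaveOn_log_Gamma_add_sub_log_Gamma_sub_log_Gamma.comp_linearMap M).subset
      (fun α hα => by rw [mem_preimage, hM]; exact ⟨hα j, Finset.sum_pos (fun i _ => hα i) hs⟩)
      (convex_setOf_forall_pos ι)
    refine (ih.add hstep).congr fun α _ => ?_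
    simp only [Pi.add_apply, Function.comp_apply, hM, Finset.sum_cons]
    ring

/-- The log conjugate-prior density is concave: for every `n ≥ 2`, `η > 0`,
and `ν ∈ ℝⁿ`, the function
`F(α) = η·[log Γ(∑ α_i) − ∑ log Γ(α_i)] − ∑ α_i·ν_i` is concave on the
positive orthant. -/
theorem log_conjugate_prior_concave (n : ℕ) (hn : 2 ≤ n) (η : ℝ) (hη : 0 < η)
    (ν : Fin n → ℝ) :
    ConcaveOn ℝ {α : Fin n → ℝ | ∀ i, 0 < α i}
      (fun α : Fin n → ℝ =>
        η * (Real.log (Real.Gamma (∑ i, α i)) - ∑ i, Real.log (Real.Gamma (α i)))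
          - ∑ i, α i * ν i) := by
  have hG := (concaveOn_log_Gamma_sum_sub_sum_log_Gamma
    (Finset.univ_nonempty_iff.2 ⟨(⟨0, by omega⟩ : Fin n)⟩)).smul hη.le
  exact hG.sub (((dotProductBilin ℝ ℝ).flip ν).convexOn (convex_setOf_forall_pos _))
end

section
/- Equivalence of the fixed-point equations with stationarity of the surrogate: under the setup of the minorization property (K ≥ 2, β ∈ (0,1], γ > 0, η > 0, ν ∈ ℝ^K, s with positive entries, current iterate α⁰ with positive entries, u⁰ = ∑ α⁰_i, x⁰ = K(1−β) + β·u⁰), a point α ∈ ℝ^K with all entries positive maximizes the surrogate M(α) := log Γ(x⁰) + β·Ψ(x⁰)·(∑_i α_i − u⁰) − ∑_i log Γ(β·α_i + (1−β)) + β·∑_i α_i·log s_i + γ·η·[log Γ(u⁰) + Ψ(u⁰)·(∑_i α_i − u⁰) − ∑_i log Γ(α_i)] − γ·∑_i α_i·ν_i over the positive orthant if and only if for every j ∈ {1,…,K}: β·Ψ(β·α_j + (1−β)) + γ·η·Ψ(α_j) = β·Ψ(x⁰) + β·log s_j + γ·η·Ψ(u⁰) − γ·ν_j. -/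
/-!
Up to an additive constant, the surrogate is a sum of one-variable functions
`t ↦ c_j t - log Γ(β t + 1 - β) - γ η log Γ(t)`, one per coordinate. Each is concave on `(0, ∞)`
because `log Γ` is convex there (Bohr–Mollerup), so a point of the positive orthant maximizes the
sum exactly when every coordinate maximizes its own summand, i.e. when every derivative vanishes.
-/

open Real Set

/-- The digamma function: derivative of `log ∘ Γ`. -/
noncomputable def digamma : ℝ → ℝ := deriv (fun x : ℝ => Real.log (Real.Gamma x))

theorem hasDerivAt_log_Gamma {x : ℝ} (hx : 0 < x) :
    HasDerivAt (fun t => log (Gamma t)) (digamma x) x :=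
  ((differentiableAt_Gamma fun m => ((neg_nonpos.mpr m.cast_nonneg).trans_lt hx).ne').log
    (Gamma_pos_of_pos hx).ne').hasDerivAt

theorem ConcaveOn.isMaxOn_iff_of_hasDerivAt {f : ℝ → ℝ} {S : Set ℝ} {x f' : ℝ}
    (hf : ConcaveOn ℝ S f) (hx : x ∈ interior S) (hd : HasDerivAt f f' x) :
    IsMaxOn f S x ↔ f' = 0 := by
  refine ⟨fun hmax => (hmax.isLocalMax (mem_interior_iff_mem_nhds.mp hx)).hasDerivAt_eq_zero hd,
    fun hzero => ?_⟩
  have hright : derivWithin (-f) (Ioi x) x = 0 := by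
    rw [hd.neg.hasDerivWithinAt.derivWithin (uniqueDiffWithinAt_Ioi x), hzero, neg_zero]
  exact isMaxOn_iff.mpr fun y hy =>
    neg_le_neg_iff.mp (isMinOn_iff.mp (hf.neg.isMinOn_of_rightDeriv_eq_zero hx hright) y hy)

theorem isMaxOn_sum_pi_iff {ι α β : Type*} [Fintype ι] [AddCommMonoid β] [PartialOrder β]
    [IsOrderedCancelAddMonoid β] {f : ι → α → β} {S : ι → Set α} {x : ι → α}
    (hx : x ∈ univ.pi S) :
    IsMaxOn (fun y => ∑ i, f i (y i)) (univ.pi S) x ↔ ∀ i, IsMaxOn (f i) (S i) (x i) := by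
  classical
  refine ⟨fun hmax j t ht => ?_, fun hcoord y hy =>
    Finset.sum_le_sum fun i _ => hcoord i (hy i (mem_univ i))⟩
  have hupdate : Function.update x j t ∈ univ.pi S := by
    intro i _
    rcases eq_or_ne i j with rfl | hij
    · simpa using ht
    · simpa [Function.update_of_ne hij] using hx i (mem_univ i)
  have hle : ∑ i, f i (Function.update x j t i) ≤ ∑ i, f i (x i) := hmax hupdate
  rw [Finset.sum_eq_add_sum_sdiff_singleton_of_mem (Finset.mem_univ j) fun i => f i (x i)] at hle
  simp only [Function.apply_update (fun i => f i), Finset.sum_update_of_mem (Finset.mem_univ j)]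
    at hle
  exact le_of_add_le_add_right hle

theorem mul_add_one_sub_pos {β t : ℝ} (hβ0 : 0 ≤ β) (hβ1 : β ≤ 1) (ht : 0 < t) :
    0 < β * t + (1 - β) := by
  rcases hβ0.eq_or_lt with rfl | hβ
  · norm_num
  · linarith [mul_pos hβ ht]

/-- The surrogate restricted to one coordinate, up to an additive constant: `κ` stands for `γ η`
and `c` for the coefficient of `α_j` in the linear part. -/
noncomputable def surrogateCoord (β κ c t : ℝ) : ℝ :=
  c * t - log (Gamma (β * t + (1 - β))) - κ * log (Gamma t)

section SurrogateCoord

variable {β κ c : ℝ}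

theorem concaveOn_surrogateCoord (hβ0 : 0 ≤ β) (hβ1 : β ≤ 1) (hκ : 0 ≤ κ) :
    ConcaveOn ℝ (Ioi 0) (surrogateCoord β κ c) := by
  have hlin : ConcaveOn ℝ (Ioi 0) fun t : ℝ => c * t :=
    (LinearMap.mulLeft ℝ c).concaveOn (convex_Ioi 0)
  have hshift : ConvexOn ℝ (Ioi 0) fun t : ℝ => log (Gamma (β * t + (1 - β))) := by
    have hline : ∀ t : ℝ, AffineMap.lineMap (1 - β) (1 : ℝ) t = β * t + (1 - β) := fun t => by
      rw [AffineMap.lineMap_apply_ring']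
      ring
    have hmaps : Ioi (0 : ℝ) ⊆ AffineMap.lineMap (1 - β) (1 : ℝ) ⁻¹' Ioi 0 := fun t ht => by
      simpa only [mem_preimage, hline, mem_Ioi] using mul_add_one_sub_pos hβ0 hβ1 ht
    simpa only [Function.comp_def, hline] using
      (convexOn_log_Gamma.comp_affineMap _).subset hmaps (convex_Ioi 0)
  have hscaled : ConvexOn ℝ (Ioi 0) fun t : ℝ => κ * log (Gamma t) :=
    convexOn_log_Gamma.smul hκ
  exact (hlin.sub hshift).sub hscaled

theorem hasDerivAt_surrogateCoord (hβ0 : 0 ≤ β) (hβ1 : β ≤ 1) {t : ℝ} (ht : 0 < t) :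
    HasDerivAt (surrogateCoord β κ c)
      (c - β * digamma (β * t + (1 - β)) - κ * digamma t) t := by
  have haffine : HasDerivAt (fun y : ℝ => β * y + (1 - β)) β t := by
    simpa using ((hasDerivAt_id t).const_mul β).add_const (1 - β)
  have hshift := (hasDerivAt_log_Gamma (mul_add_one_sub_pos hβ0 hβ1 ht)).comp t haffine
  have hlin : HasDerivAt (fun y : ℝ => c * y) c t := by
    simpa using (hasDerivAt_id t).const_mul c
  exact ((hlin.sub hshift).sub ((hasDerivAt_log_Gamma ht).const_mul κ)).congr_deriv (by ring)

theorem isMaxOn_surrogateCoord_iff (hβ0 : 0 ≤ β) (hβ1 : β ≤ 1) (hκ : 0 ≤ κ) {t : ℝ}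
    (ht : 0 < t) :
    IsMaxOn (surrogateCoord β κ c) (Ioi 0) t ↔
      β * digamma (β * t + (1 - β)) + κ * digamma t = c := by
  rw [(concaveOn_surrogateCoord hβ0 hβ1 hκ).isMaxOn_iff_of_hasDerivAt
    (by rwa [interior_Ioi]) (hasDerivAt_surrogateCoord hβ0 hβ1 ht)]
  rw [sub_sub, sub_eq_zero, eq_comm]

end SurrogateCoord

theorem surrogate_max_iff_fixedPoint_general (K : ℕ) (β γ η : ℝ)
    (hβ : 0 < β) (hβ1 : β ≤ 1) (hγ : 0 < γ) (hη : 0 < η)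
    (ν s : Fin K → ℝ)
    (u₀ x₀ : ℝ)
    (M : (Fin K → ℝ) → ℝ)
    (hM : ∀ α, M α =
      Real.log (Real.Gamma x₀) + β * digamma x₀ * ((∑ i, α i) - u₀)
        - ∑ i, Real.log (Real.Gamma (β * α i + (1 - β)))
        + β * ∑ i, α i * Real.log (s i)
        + γ * η * (Real.log (Real.Gamma u₀) + digamma u₀ * ((∑ i, α i) - u₀)
            - ∑ i, Real.log (Real.Gamma (α i)))
        - γ * ∑ i, α i * ν i)
    (α : Fin K → ℝ) (hα : ∀ i, 0 < α i) :
    (∀ α' : Fin K → ℝ, (∀ i, 0 < α' i) → M α' ≤ M α) ↔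
      (∀ j : Fin K,
        β * digamma (β * α j + (1 - β)) + γ * η * digamma (α j) =
          β * digamma x₀ + β * Real.log (s j) + γ * η * digamma u₀ - γ * ν j) := by
  let c : Fin K → ℝ := fun j => β * digamma x₀ + β * log (s j) + γ * η * digamma u₀ - γ * ν j
  let C : ℝ := log (Gamma x₀) - β * digamma x₀ * u₀
    + γ * η * (log (Gamma u₀) - digamma u₀ * u₀)
  have hsplit : ∀ α', M α' = C + ∑ i, surrogateCoord β (γ * η) (c i) (α' i) := by
    intro α'
    have hcoord : ∀ i, surrogateCoord β (γ * η) (c i) (α' i) =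
        β * digamma x₀ * α' i + β * (α' i * log (s i)) + γ * η * digamma u₀ * α' i
          - γ * (α' i * ν i) - log (Gamma (β * α' i + (1 - β))) - γ * η * log (Gamma (α' i)) := by
      intro i
      simp only [surrogateCoord, c]
      ring
    rw [hM, Finset.sum_congr rfl fun i _ => hcoord i]
    simp only [Finset.sum_sub_distrib, Finset.sum_add_distrib, ← Finset.mul_sum]
    ring
  have hκ : 0 ≤ γ * η := by positivity
  calc (∀ α' : Fin K → ℝ, (∀ i, 0 < α' i) → M α' ≤ M α)
      ↔ IsMaxOn (fun y => ∑ i, surrogateCoord β (γ * η) (c i) (y i))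
          (univ.pi fun _ => Ioi 0) α := by
        simp only [isMaxOn_iff, mem_univ_pi, mem_Ioi, hsplit, add_le_add_iff_left]
    _ ↔ ∀ j, IsMaxOn (surrogateCoord β (γ * η) (c j)) (Ioi 0) (α j) :=
        isMaxOn_sum_pi_iff fun i _ => hα i
    _ ↔ _ := forall_congr' fun j => isMaxOn_surrogateCoord_iff hβ.le hβ1 hκ (hα j)

/-- Equivalence of the fixed-point equations with stationarity of the
surrogate: `α` with positive entries maximizes the tangent-line surrogate `M`
(built at the current iterate `α⁰`) over the positive orthant if and only if
the fixed-point update equations hold at `α`. -/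
theorem surrogate_max_iff_fixedPoint (K : ℕ) (hK : 2 ≤ K) (β γ η : ℝ)
    (hβ : 0 < β) (hβ1 : β ≤ 1) (hγ : 0 < γ) (hη : 0 < η)
    (ν s : Fin K → ℝ) (hs : ∀ i, 0 < s i)
    (α₀ : Fin K → ℝ) (hα₀ : ∀ i, 0 < α₀ i)
    (u₀ x₀ : ℝ) (hu₀ : u₀ = ∑ i, α₀ i) (hx₀ : x₀ = (K : ℝ) * (1 - β) + β * u₀)
    (M : (Fin K → ℝ) → ℝ)
    (hM : ∀ α, M α =
      Real.log (Real.Gamma x₀) + β * digamma x₀ * ((∑ i, α i) - u₀)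
        - ∑ i, Real.log (Real.Gamma (β * α i + (1 - β)))
        + β * ∑ i, α i * Real.log (s i)
        + γ * η * (Real.log (Real.Gamma u₀) + digamma u₀ * ((∑ i, α i) - u₀)
            - ∑ i, Real.log (Real.Gamma (α i)))
        - γ * ∑ i, α i * ν i)
    (α : Fin K → ℝ) (hα : ∀ i, 0 < α i) :
    (∀ α' : Fin K → ℝ, (∀ i, 0 < α' i) → M α' ≤ M α) ↔
      (∀ j : Fin K,
        β * digamma (β * α j + (1 - β)) + γ * η * digamma (α j) =
          β * digamma x₀ + β * Real.log (s j) + γ * η * digamma u₀ - γ * ν j) :=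
  surrogate_max_iff_fixedPoint_general K β γ η hβ hβ1 hγ hη ν s u₀ x₀ M hM α hα
end
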